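/- Let (u_n) ⊂ H^{1/2,2}(𝕊¹,𝕊¹) satisfy deg(u_n) = k for all n and sup_n E(u_n) < ∞, and suppose u_n converges weakly in L²(𝕊¹) to some u ∈ H^{1/2,2}(𝕊¹,𝕊¹) with deg(u) = ℓ. Then E(u) ≤ liminf_{n→∞} E(u_n) − 2π|k − ℓ|. -/

import Mathlib

open MeasureTheory Real Filter

/-- k-th Fourier coefficient of a 2π-periodic map u (representing a map on 𝕊¹ via
θ ↦ u(θ) = u(e^{iθ})): a_k = (1/√(2π)) ∫₀^{2π} u(θ) e^{-ikθ} dθ. -/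
noncomputable def fCoeff (u : ℝ → ℂ) (k : ℤ) : ℂ :=
  (1 / Real.sqrt (2 * π) : ℝ) •
    ∫ θ in (0 : ℝ)..(2 * π), u θ * Complex.exp (-(k : ℂ) * Complex.I * (θ : ℂ))

/-- Membership in H^{1/2,2}(𝕊¹,𝕊¹), for circle maps represented by 2π-periodic
functions on ℝ: |u| = 1 a.e. and Σ |k| |a_k|² < ∞. -/
def MemH12Circ (u : ℝ → ℂ) : Prop :=
  Function.Periodic u (2 * π) ∧ AEStronglyMeasurable u (volume : Measure ℝ) ∧
    (∀ᵐ θ : ℝ, ‖u θ‖ = 1) ∧ Summable (fun k : ℤ => (|k| : ℝ) * ‖fCoeff u k‖ ^ 2)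

/-- Degree of a circle map: deg(u) = (1/2π) Σ_{k ∈ ℤ} k |a_k|². -/
noncomputable def degC (u : ℝ → ℂ) : ℝ :=
  (1 / (2 * π)) * ∑' k : ℤ, (k : ℝ) * ‖fCoeff u k‖ ^ 2

/-- Energy E(u) = Σ_{k ∈ ℤ} |k| |a_k|². -/
noncomputable def energyC (u : ℝ → ℂ) : ℝ :=
  ∑' k : ℤ, (|k| : ℝ) * ‖fCoeff u k‖ ^ 2

/-- Fatou's lemma for sums: if nonnegative summable sequences converge pointwise,
the sum of the limit is at most the liminf of the sums. -/
lemma fatou_tsum (g : ℕ → ℤ → ℝ) (h : ℤ → ℝ) (hg0 : ∀ n m, 0 ≤ g n m)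
    (hgs : ∀ n, Summable (g n)) (hh : Summable h)
    (hlim : ∀ m, Tendsto (fun n => g n m) atTop (nhds (h m)))
    (hub : ∃ B : ℝ, ∀ n, ∑' m, g n m ≤ B) :
    ∑' m, h m ≤ Filter.liminf (fun n => ∑' m, g n m) atTop := by
  refine Summable.tsum_le_of_sum_le hh (fun s => ?_)
  have h1 : Tendsto (fun n => ∑ m ∈ s, g n m) atTop (nhds (∑ m ∈ s, h m)) :=
    tendsto_finset_sum s (fun m _ => hlim m)
  have h2 : ∀ n, ∑ m ∈ s, g n m ≤ ∑' m, g n m := fun n =>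
    Summable.sum_le_tsum s (fun m _ => hg0 n m) (hgs n)
  rw [← h1.liminf_eq]
  obtain ⟨B, hB⟩ := hub
  refine liminf_le_liminf (Eventually.of_forall h2) ?_ ?_
  · exact h1.isBoundedUnder_ge
  · exact IsBoundedUnder.isCoboundedUnder_ge
      (isBoundedUnder_of ⟨B, fun n => hB n⟩)

/-- Splitting off the signed part of the energy. -/
lemma key_tsum (σ : ℝ) (v : ℝ → ℂ)
    (hs : Summable (fun m : ℤ => (|m| : ℝ) * ‖fCoeff v m‖ ^ 2)) :
    Summable (fun m : ℤ => ((|m| : ℝ) - σ * m) * ‖fCoeff v m‖ ^ 2) ∧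
      ∑' m : ℤ, ((|m| : ℝ) - σ * m) * ‖fCoeff v m‖ ^ 2
        = energyC v - σ * ∑' m : ℤ, (m : ℝ) * ‖fCoeff v m‖ ^ 2 := by
  have hB : Summable (fun m : ℤ => (m : ℝ) * ‖fCoeff v m‖ ^ 2) := by
    refine Summable.of_norm_bounded hs (fun m => ?_)
    rw [Real.norm_eq_abs, abs_mul, abs_of_nonneg (by positivity : (0:ℝ) ≤ ‖fCoeff v m‖ ^ 2)]
  have hfun : (fun m : ℤ => ((|m| : ℝ) - σ * m) * ‖fCoeff v m‖ ^ 2)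
      = fun m : ℤ => (|m| : ℝ) * ‖fCoeff v m‖ ^ 2 - σ * ((m : ℝ) * ‖fCoeff v m‖ ^ 2) := by
    funext m; ring
  constructor
  · rw [hfun]; exact hs.sub (hB.mul_left σ)
  · rw [hfun, Summable.tsum_sub hs (hB.mul_left σ), tsum_mul_left, energyC]

/-- energy cost of a degree jump under weak convergence:
if deg(u_n) = k, energies are bounded, and u_n ⇀ u weakly in L²(𝕊¹) with deg(u) = ℓ, then
E(u) ≤ liminf E(u_n) − 2π|k − ℓ|. -/
theorem degree_jump_energy_cost (u : ℕ → ℝ → ℂ) (w : ℝ → ℂ) (k l : ℤ)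
    (hu : ∀ n, MemH12Circ (u n))
    (hdeg : ∀ n, degC (u n) = (k : ℝ))
    (hbd : ∃ C : ℝ, ∀ n, energyC (u n) ≤ C)
    (hw : MemH12Circ w)
    (hdegw : degC w = (l : ℝ))
    (hweak : ∀ g : ℝ → ℂ, MemLp g 2 (volume.restrict (Set.Ioc (0 : ℝ) (2 * π))) →
      Tendsto (fun n => ∫ θ in (0 : ℝ)..(2 * π), (starRingEnd ℂ) (g θ) * u n θ) atTop
        (nhds (∫ θ in (0 : ℝ)..(2 * π), (starRingEnd ℂ) (g θ) * w θ))) :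
    energyC w ≤ Filter.liminf (fun n => energyC (u n)) atTop - 2 * π * |(k : ℝ) - (l : ℝ)| := by
  obtain ⟨C, hC⟩ := hbd
  have hcoef : ∀ m : ℤ, Tendsto (fun n => fCoeff (u n) m) atTop (nhds (fCoeff w m)) := by
    intro m
    have hgc : Continuous (fun θ : ℝ => Complex.exp ((m : ℂ) * Complex.I * θ)) := by fun_prop
    have hfin : IsFiniteMeasure (volume.restrict (Set.Ioc (0:ℝ) (2*π))) := by
      constructor
      rw [Measure.restrict_apply_univ, Real.volume_Ioc]
      exact ENNReal.ofReal_lt_top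
    have hnorm : ∀ θ : ℝ, ‖Complex.exp ((m : ℂ) * Complex.I * θ)‖ = 1 := by
      intro θ
      rw [Complex.norm_exp]
      have h0 : ((m : ℂ) * Complex.I * θ).re = 0 := by simp
      rw [h0, Real.exp_zero]
    have hmem : MemLp (fun θ : ℝ => Complex.exp ((m : ℂ) * Complex.I * θ)) 2
        (volume.restrict (Set.Ioc (0:ℝ) (2*π))) :=
      (memLp_top_of_bound hgc.aestronglyMeasurable 1
        (Eventually.of_forall fun θ => (hnorm θ).le)).mono_exponent le_top
    have h := hweak _ hmem
    have heq : ∀ v : ℝ → ℂ,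
        (∫ θ in (0:ℝ)..(2*π), (starRingEnd ℂ) (Complex.exp ((m : ℂ) * Complex.I * θ)) * v θ)
          = ∫ θ in (0:ℝ)..(2*π), v θ * Complex.exp (-(m : ℂ) * Complex.I * θ) := by
      intro v
      refine intervalIntegral.integral_congr (fun θ _ => ?_)
      rw [mul_comm]
      congr 1
      rw [← Complex.exp_conj]
      congr 1
      simp [map_mul, Complex.conj_I]
    rw [heq w] at h
    simp_rw [heq] at h
    unfold fCoeff
    exact h.const_smul _
  have hcoefsq : ∀ m : ℤ, Tendsto (fun n => ‖fCoeff (u n) m‖ ^ 2) atTop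
      (nhds (‖fCoeff w m‖ ^ 2)) := fun m => ((hcoef m).norm).pow 2
  set σ : ℝ := if (l : ℝ) ≤ (k : ℝ) then 1 else -1 with hσdef
  have hσabs : σ * ((k : ℝ) - l) = |(k : ℝ) - l| := by
    rw [hσdef]
    split
    · rename_i hkl
      rw [abs_of_nonneg (by linarith : (0:ℝ) ≤ (k : ℝ) - l)]
      ring
    · rename_i hkl
      rw [abs_of_neg (by push_neg at hkl; linarith : ((k : ℝ) - l) < 0)]
      ring
  have hσm : ∀ m : ℤ, σ * (m : ℝ) ≤ |(m : ℝ)| := by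
    intro m
    rw [hσdef]
    split
    · simpa using le_abs_self (m : ℝ)
    · simpa using neg_le_abs (m : ℝ)
  have hterm0 : ∀ (v : ℝ → ℂ) (m : ℤ), 0 ≤ ((|m| : ℝ) - σ * m) * ‖fCoeff v m‖ ^ 2 := by
    intro v m
    have h1 := hσm m
    have h2 : (0:ℝ) ≤ ‖fCoeff v m‖ ^ 2 := by positivity
    nlinarith
  have hKn := fun n => key_tsum σ (u n) (hu n).2.2.2
  have hKw := key_tsum σ w hw.2.2.2
  have hπ : (0:ℝ) < π := Real.pi_pos
  have hBn : ∀ n, ∑' m : ℤ, (m : ℝ) * ‖fCoeff (u n) m‖ ^ 2 = 2 * π * (k : ℝ) := by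
    intro n
    have h1 := hdeg n
    rw [degC] at h1
    have h2 : (2*π) * ((1/(2*π)) * ∑' m : ℤ, (m : ℝ) * ‖fCoeff (u n) m‖ ^ 2)
        = (2*π) * (k : ℝ) := by rw [h1]
    have h3 : (2*π) * (1/(2*π)) = 1 := mul_one_div_cancel (by positivity)
    rw [← mul_assoc, h3, one_mul] at h2
    linarith
  have hBw : ∑' m : ℤ, (m : ℝ) * ‖fCoeff w m‖ ^ 2 = 2 * π * (l : ℝ) := by
    have h1 := hdegw
    rw [degC] at h1
    have h2 : (2*π) * ((1/(2*π)) * ∑' m : ℤ, (m : ℝ) * ‖fCoeff w m‖ ^ 2)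
        = (2*π) * (l : ℝ) := by rw [h1]
    have h3 : (2*π) * (1/(2*π)) = 1 := mul_one_div_cancel (by positivity)
    rw [← mul_assoc, h3, one_mul] at h2
    linarith
  have hEn : ∀ n, ∑' m : ℤ, ((|m| : ℝ) - σ * m) * ‖fCoeff (u n) m‖ ^ 2
      = energyC (u n) - σ * (2 * π * k) := by
    intro n
    rw [(hKn n).2, hBn n]
  have hEw : ∑' m : ℤ, ((|m| : ℝ) - σ * m) * ‖fCoeff w m‖ ^ 2
      = energyC w - σ * (2 * π * l) := by
    rw [hKw.2, hBw]
  have hFat : energyC w - σ * (2 * π * l) ≤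
      Filter.liminf (fun n => energyC (u n) - σ * (2 * π * k)) atTop := by
    rw [← hEw]
    have hF := fatou_tsum (fun n m => ((|m| : ℝ) - σ * m) * ‖fCoeff (u n) m‖ ^ 2)
      (fun m => ((|m| : ℝ) - σ * m) * ‖fCoeff w m‖ ^ 2)
      (fun n m => hterm0 (u n) m) (fun n => (hKn n).1) hKw.1
      (fun m => ((hcoefsq m).const_mul _))
      ⟨C - σ * (2 * π * k), fun n => by rw [hEn n]; linarith [hC n]⟩
    simp_rw [hEn] at hF
    exact hF
  have hE0 : ∀ n, (0:ℝ) ≤ energyC (u n) := by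
    intro n
    exact tsum_nonneg (fun m => by positivity)
  have hlimc : Filter.liminf (fun n => energyC (u n) + -(σ * (2 * π * k))) atTop
      = Filter.liminf (fun n => energyC (u n)) atTop + -(σ * (2 * π * k)) :=
    liminf_add_const atTop (fun n => energyC (u n)) (-(σ * (2 * π * k)))
      (IsBoundedUnder.isCoboundedUnder_ge (isBoundedUnder_of ⟨C, fun n => hC n⟩))
      (isBoundedUnder_of ⟨0, fun n => hE0 n⟩)
  have hlim : Filter.liminf (fun n => energyC (u n) - σ * (2 * π * k)) atTop
      = Filter.liminf (fun n => energyC (u n)) atTop - σ * (2 * π * k) := by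
    simp_rw [sub_eq_add_neg]
    exact hlimc
  rw [hlim] at hFat
  have habs : 2 * π * |(k : ℝ) - (l : ℝ)| = σ * (2 * π * k) - σ * (2 * π * l) := by
    rw [← hσabs]
    ring
  linarith
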